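/- arXiv:1805.02872 — 6 statements merged into one kernel-verified Lean document; each statement's English description precedes it below -/
import Mathlib

section
/- If (X, U) is a unitary asymptote of T, then the linear mapping Γ from the commutant {U}' to the intertwining space I(T,U) defined by Γ(Y') = Y'X is a bounded bijective linear map, and hence (X,U) has optimal norm-control equal to the operator norm of Γ^{-1}. -/
open ContinuousLinearMap

/-- A commuting tuple of operators. -/
def CommutingTuple {n : ℕ} {H : Type} [NormedAddCommGroup H] [InnerProductSpace ℂ H]
    (T : Fin n → H →L[ℂ] H) : Prop :=
  ∀ i j, T i ∘L T j = T j ∘L T i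

/-- A tuple of unitary operators. -/
def UnitaryTuple {n : ℕ} {K : Type} [NormedAddCommGroup K] [InnerProductSpace ℂ K]
    [CompleteSpace K] (U : Fin n → K →L[ℂ] K) : Prop :=
  ∀ i, U i ∈ unitary (K →L[ℂ] K)

/-- `X` intertwines the tuple `T` with the tuple `U`. -/
def IntertwinesTuple {n : ℕ} {H K : Type} [NormedAddCommGroup H] [InnerProductSpace ℂ H]
    [NormedAddCommGroup K] [InnerProductSpace ℂ K]
    (T : Fin n → H →L[ℂ] H) (U : Fin n → K →L[ℂ] K) (X : H →L[ℂ] K) : Prop :=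
  ∀ i, X ∘L T i = U i ∘L X

/-- `(X, U)` is a unitary asymptote of the commuting tuple `T`: it is a unitary
intertwining pair which is universal among all unitary intertwining pairs of `T`. -/
def IsUnitaryAsymptote {n : ℕ} {H K : Type}
    [NormedAddCommGroup H] [InnerProductSpace ℂ H] [CompleteSpace H]
    [NormedAddCommGroup K] [InnerProductSpace ℂ K] [CompleteSpace K]
    (T : Fin n → H →L[ℂ] H) (U : Fin n → K →L[ℂ] K) (X : H →L[ℂ] K) : Prop :=
  UnitaryTuple U ∧ IntertwinesTuple T U X ∧
  ∀ (K' : Type) (_ : NormedAddCommGroup K') (_ : InnerProductSpace ℂ K')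
    (_ : CompleteSpace K') (U' : Fin n → K' →L[ℂ] K') (X' : H →L[ℂ] K'),
    UnitaryTuple U' → IntertwinesTuple T U' X' →
    ∃! Y : K →L[ℂ] K', IntertwinesTuple U U' Y ∧ X' = Y ∘L X

/-- Minimality of a unitary intertwining pair: the only closed subspace of `K`
containing the range of `X` and reducing every `U i` is `K` itself. -/
def MinimalPair {n : ℕ} {H K : Type}
    [NormedAddCommGroup H] [InnerProductSpace ℂ H]
    [NormedAddCommGroup K] [InnerProductSpace ℂ K] [CompleteSpace K]
    (U : Fin n → K →L[ℂ] K) (X : H →L[ℂ] K) : Prop :=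
  ∀ M : Submodule ℂ K, IsClosed (M : Set K) → (∀ h, X h ∈ M) →
    (∀ i, ∀ y ∈ M, U i y ∈ M) → (∀ i, ∀ y ∈ M, adjoint (U i) y ∈ M) → M = ⊤


/-- Norm-control with constant `κ` for the unitary intertwining pair `(X, U)`. -/
def HasNormControl {n : ℕ} {H K : Type}
    [NormedAddCommGroup H] [InnerProductSpace ℂ H]
    [NormedAddCommGroup K] [InnerProductSpace ℂ K] [CompleteSpace K]
    (U : Fin n → K →L[ℂ] K) (X : H →L[ℂ] K) (κ : ℝ) : Prop :=
  ∀ (K' : Type) (_ : NormedAddCommGroup K') (_ : InnerProductSpace ℂ K')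
    (_ : CompleteSpace K') (U' : Fin n → K' →L[ℂ] K') (Y : K →L[ℂ] K'),
    UnitaryTuple U' → IntertwinesTuple U U' Y → ‖Y‖ ≤ κ * ‖Y ∘L X‖

/-- If `(X,U)` is a unitary asymptote of `T`, then `Γ : {U}' → I(T,U)`, `D ↦ D ∘ X`,
is bijective (every intertwiner `X'` is `D ∘ X` for a unique `D` in the commutant of `U`),
and the optimal norm-control equals `‖Γ⁻¹‖`, i.e. the best constant over the
commutant of `U`. -/
theorem commutant_map_bijective_and_optimal_norm_control {n : ℕ} {H K : Type}
    [NormedAddCommGroup H] [InnerProductSpace ℂ H] [CompleteSpace H]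
    [NormedAddCommGroup K] [InnerProductSpace ℂ K] [CompleteSpace K]
    (T : Fin n → H →L[ℂ] H) (U : Fin n → K →L[ℂ] K) (X : H →L[ℂ] K)
    (hT : CommutingTuple T) (hA : IsUnitaryAsymptote T U X) :
    (∀ X' : H →L[ℂ] K, IntertwinesTuple T U X' →
      ∃! D : K →L[ℂ] K, IntertwinesTuple U U D ∧ X' = D ∘L X) ∧
    sInf {κ : ℝ | 0 ≤ κ ∧ HasNormControl U X κ} =
      sInf {κ : ℝ | 0 ≤ κ ∧ ∀ D : K →L[ℂ] K, IntertwinesTuple U U D →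
        ‖D‖ ≤ κ * ‖D ∘L X‖} := by
  obtain ⟨hU, hX, huniv⟩ := hA
  constructor
  · intro X' hX'
    exact huniv K _ _ _ U X' hU hX'
  · congr 1
    ext κ
    simp only [Set.mem_setOf_eq]
    constructor
    · rintro ⟨hκ, h⟩
      exact ⟨hκ, fun D hD => h K _ _ _ U D hU hD⟩
    · rintro ⟨hκ, h⟩
      refine ⟨hκ, ?_⟩
      intro K' _ _ _ U' Y hU' hY
      have hadj : ∀ i, adjoint Y ∘L U' i = U i ∘L adjoint Y := by
        intro i
        have h1 : adjoint (U i) ∘L adjoint Y = adjoint Y ∘L adjoint (U' i) := by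
          rw [← adjoint_comp, ← adjoint_comp, hY i]
        have hu1 : U i ∘L adjoint (U i) = 1 := by
          rw [← ContinuousLinearMap.star_eq_adjoint, ← ContinuousLinearMap.mul_def]
          exact Unitary.mul_star_self_of_mem (hU i)
        have hu2 : adjoint (U' i) ∘L U' i = 1 := by
          rw [← ContinuousLinearMap.star_eq_adjoint, ← ContinuousLinearMap.mul_def]
          exact Unitary.star_mul_self_of_mem (hU' i)
        calc adjoint Y ∘L U' i
            = (U i ∘L adjoint (U i)) ∘L (adjoint Y ∘L U' i) := by
              rw [hu1, ContinuousLinearMap.one_def, ContinuousLinearMap.id_comp]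
          _ = U i ∘L ((adjoint (U i) ∘L adjoint Y) ∘L U' i) := by
              simp only [ContinuousLinearMap.comp_assoc]
          _ = U i ∘L (adjoint Y ∘L (adjoint (U' i) ∘L U' i)) := by
              rw [h1]; simp only [ContinuousLinearMap.comp_assoc]
          _ = U i ∘L adjoint Y := by
              rw [hu2, ContinuousLinearMap.one_def, ContinuousLinearMap.comp_id]
      set D : K →L[ℂ] K := adjoint Y ∘L Y with hDdef
      have hD : IntertwinesTuple U U D := by
        intro i
        calc D ∘L U i = adjoint Y ∘L (Y ∘L U i) := by
              simp [hDdef, ContinuousLinearMap.comp_assoc]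
          _ = (adjoint Y ∘L U' i) ∘L Y := by
              rw [hY i]; simp [ContinuousLinearMap.comp_assoc]
          _ = U i ∘L D := by rw [hadj i]; simp [hDdef, ContinuousLinearMap.comp_assoc]
      have h2 := h D hD
      have hnD : ‖D‖ = ‖Y‖ * ‖Y‖ := ContinuousLinearMap.norm_adjoint_comp_self Y
      have hDX : ‖D ∘L X‖ ≤ ‖Y‖ * ‖Y ∘L X‖ := by
        calc ‖D ∘L X‖ = ‖adjoint Y ∘L (Y ∘L X)‖ := by
              rw [hDdef, ContinuousLinearMap.comp_assoc]
          _ ≤ ‖adjoint Y‖ * ‖Y ∘L X‖ := ContinuousLinearMap.opNorm_comp_le _ _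
          _ = ‖Y‖ * ‖Y ∘L X‖ := by rw [LinearIsometryEquiv.norm_map]
      rcases eq_or_lt_of_le (norm_nonneg Y) with h0 | h0
      · have : κ * ‖Y ∘L X‖ ≥ 0 := mul_nonneg hκ (norm_nonneg _)
        linarith
      · have key : ‖Y‖ * ‖Y‖ ≤ κ * (‖Y‖ * ‖Y ∘L X‖) := by
          calc ‖Y‖ * ‖Y‖ = ‖D‖ := hnD.symm
            _ ≤ κ * ‖D ∘L X‖ := h2
            _ ≤ κ * (‖Y‖ * ‖Y ∘L X‖) := by
                exact mul_le_mul_of_nonneg_left hDX hκ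
        nlinarith
end

section
/- If (X,U) and (X̃,Ũ) are two unitary asymptotes of T, each having norm-control 1, with ‖X‖ ≤ 1 and ‖X̃‖ ≤ 1, then the pairs are unitarily equivalent: there exists a unitary Z intertwining U with Ũ such that X̃ = ZX; moreover ‖X‖ = 1 provided X ≠ 0. -/
open ContinuousLinearMap

/-- Two unitary asymptotes with norm-control `1` and contractive intertwiners are
unitarily equivalent, and the intertwiner has norm one when nonzero. -/
theorem unitaryAsymptotes_normControl_one_equivalent {n : ℕ} {H K K' : Type}
    [NormedAddCommGroup H] [InnerProductSpace ℂ H] [CompleteSpace H]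
    [NormedAddCommGroup K] [InnerProductSpace ℂ K] [CompleteSpace K]
    [NormedAddCommGroup K'] [InnerProductSpace ℂ K'] [CompleteSpace K']
    (T : Fin n → H →L[ℂ] H) (U : Fin n → K →L[ℂ] K) (X : H →L[ℂ] K)
    (U' : Fin n → K' →L[ℂ] K') (X' : H →L[ℂ] K')
    (hT : CommutingTuple T)
    (hA : IsUnitaryAsymptote T U X) (hA' : IsUnitaryAsymptote T U' X')
    (hκ : HasNormControl U X 1) (hκ' : HasNormControl U' X' 1)
    (hX : ‖X‖ ≤ 1) (hX' : ‖X'‖ ≤ 1) :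
    (∃ Z : K ≃ₗᵢ[ℂ] K', (∀ i, ∀ y : K, Z (U i y) = U' i (Z y)) ∧
      ∀ h : H, Z (X h) = X' h) ∧ (X ≠ 0 → ‖X‖ = 1) := by
  obtain ⟨hU, hIX, huniv⟩ := hA
  obtain ⟨hU', hIX', huniv'⟩ := hA'
  obtain ⟨Y, ⟨hYint, hYX⟩, hYuniq⟩ := huniv K' _ _ _ U' X' hU' hIX'
  obtain ⟨Y', ⟨hY'int, hY'X⟩, hY'uniq⟩ := huniv' K _ _ _ U X hU hIX
  obtain ⟨W, hW, hWuniq⟩ := huniv K _ _ _ U X hU hIX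
  obtain ⟨W', hW', hW'uniq⟩ := huniv' K' _ _ _ U' X' hU' hIX'
  have hid : IntertwinesTuple U U (ContinuousLinearMap.id ℂ K) ∧
      X = ContinuousLinearMap.id ℂ K ∘L X := by
    constructor
    · intro i; simp
    · simp
  have hcomp : IntertwinesTuple U U (Y' ∘L Y) ∧ X = (Y' ∘L Y) ∘L X := by
    constructor
    · intro i
      calc (Y' ∘L Y) ∘L U i = Y' ∘L (Y ∘L U i) := by rw [ContinuousLinearMap.comp_assoc]
        _ = Y' ∘L (U' i ∘L Y) := by rw [hYint i]
        _ = (Y' ∘L U' i) ∘L Y := by rw [ContinuousLinearMap.comp_assoc]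
        _ = (U i ∘L Y') ∘L Y := by rw [hY'int i]
        _ = U i ∘L (Y' ∘L Y) := by rw [ContinuousLinearMap.comp_assoc]
    · calc X = Y' ∘L X' := hY'X
        _ = Y' ∘L (Y ∘L X) := by rw [← hYX]
        _ = (Y' ∘L Y) ∘L X := by rw [ContinuousLinearMap.comp_assoc]
  have h1 : Y' ∘L Y = ContinuousLinearMap.id ℂ K := by
    rw [hWuniq _ hcomp, hWuniq _ hid]
  have hid' : IntertwinesTuple U' U' (ContinuousLinearMap.id ℂ K') ∧
      X' = ContinuousLinearMap.id ℂ K' ∘L X' := by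
    constructor
    · intro i; simp
    · simp
  have hcomp' : IntertwinesTuple U' U' (Y ∘L Y') ∧ X' = (Y ∘L Y') ∘L X' := by
    constructor
    · intro i
      calc (Y ∘L Y') ∘L U' i = Y ∘L (Y' ∘L U' i) := by rw [ContinuousLinearMap.comp_assoc]
        _ = Y ∘L (U i ∘L Y') := by rw [hY'int i]
        _ = (Y ∘L U i) ∘L Y' := by rw [ContinuousLinearMap.comp_assoc]
        _ = (U' i ∘L Y) ∘L Y' := by rw [hYint i]
        _ = U' i ∘L (Y ∘L Y') := by rw [ContinuousLinearMap.comp_assoc]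
    · calc X' = Y ∘L X := hYX
        _ = Y ∘L (Y' ∘L X') := by rw [← hY'X]
        _ = (Y ∘L Y') ∘L X' := by rw [ContinuousLinearMap.comp_assoc]
  have h2 : Y ∘L Y' = ContinuousLinearMap.id ℂ K' := by
    rw [hW'uniq _ hcomp', hW'uniq _ hid']
  have hYn : ‖Y‖ ≤ 1 := by
    have := hκ K' _ _ _ U' Y hU' hYint
    rw [one_mul, ← hYX] at this
    exact this.trans hX'
  have hY'n : ‖Y'‖ ≤ 1 := by
    have := hκ' K _ _ _ U Y' hU hY'int
    rw [one_mul, ← hY'X] at this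
    exact this.trans hX
  have hnorm : ∀ x : K, ‖Y x‖ = ‖x‖ := by
    intro x
    refine le_antisymm ?_ ?_
    · calc ‖Y x‖ ≤ ‖Y‖ * ‖x‖ := Y.le_opNorm x
        _ ≤ 1 * ‖x‖ := by gcongr
        _ = ‖x‖ := one_mul _
    · have : Y' (Y x) = x := DFunLike.congr_fun h1 x
      calc ‖x‖ = ‖Y' (Y x)‖ := by rw [this]
        _ ≤ ‖Y'‖ * ‖Y x‖ := Y'.le_opNorm _
        _ ≤ 1 * ‖Y x‖ := by gcongr
        _ = ‖Y x‖ := one_mul _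
  let E : K ≃ₗ[ℂ] K' := LinearEquiv.ofLinear Y.toLinearMap Y'.toLinearMap
    (by ext x; exact DFunLike.congr_fun h2 x) (by ext x; exact DFunLike.congr_fun h1 x)
  let Z : K ≃ₗᵢ[ℂ] K' := ⟨E, hnorm⟩
  constructor
  · refine ⟨Z, ?_, ?_⟩
    · intro i y
      exact DFunLike.congr_fun (hYint i) y
    · intro h
      exact (DFunLike.congr_fun hYX h).symm
  · intro hX0
    obtain ⟨v, hv⟩ : ∃ v : H, X v ≠ 0 := by
      by_contra hc
      push_neg at hc
      exact hX0 (ContinuousLinearMap.ext hc)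
    have : Nontrivial K := ⟨X v, 0, hv⟩
    have hone : (1:ℝ) ≤ ‖X‖ := by
      have := hκ K _ _ _ U (ContinuousLinearMap.id ℂ K) hU (fun i => by simp)
      simpa using this
    exact le_antisymm hX hone
end

section
/- If (X̃,Ũ) is a unitary asymptote of a commuting n-tuple T̃ with norm-control κ and Z ∈ I(T,T̃) is invertible (so T is similar to T̃), then (X̃Z, Ũ) is a unitary asymptote of T with norm-control κ‖Z^{-1}‖. -/
open ContinuousLinearMap

/-- Similarity transfers unitary asymptotes: if `(X̃, Ũ)` is a unitary asymptote of
`T̃` with norm-control `κ` and `Z : H ≃ T̃-space` is an invertible intertwiner of `T`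
with `T̃`, then `(X̃ ∘ Z, Ũ)` is a unitary asymptote of `T` with norm-control
`κ‖Z⁻¹‖`. -/
theorem unitaryAsymptote_of_similar {n : ℕ} {H H' K : Type}
    [NormedAddCommGroup H] [InnerProductSpace ℂ H] [CompleteSpace H]
    [NormedAddCommGroup H'] [InnerProductSpace ℂ H'] [CompleteSpace H']
    [NormedAddCommGroup K] [InnerProductSpace ℂ K] [CompleteSpace K]
    (T : Fin n → H →L[ℂ] H) (T' : Fin n → H' →L[ℂ] H')
    (U : Fin n → K →L[ℂ] K) (X : H' →L[ℂ] K) (κ : ℝ) (Z : H ≃L[ℂ] H')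
    (hT : CommutingTuple T) (hT' : CommutingTuple T')
    (hZ : ∀ i, (Z : H →L[ℂ] H') ∘L T i = T' i ∘L (Z : H →L[ℂ] H'))
    (hA : IsUnitaryAsymptote T' U X) (hκ : HasNormControl U X κ) :
    IsUnitaryAsymptote T U (X ∘L (Z : H →L[ℂ] H')) ∧
      HasNormControl U (X ∘L (Z : H →L[ℂ] H'))
        (κ * ‖(Z.symm : H' →L[ℂ] H)‖) := by

  have happ : ∀ i (x : H), Z (T i x) = T' i (Z x) := by
    intro i x
    have := congrArg (fun f => f x) (hZ i)
    simpa using this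
  have happ' : ∀ i (y : H'), Z.symm (T' i y) = T i (Z.symm y) := by
    intro i y
    have := happ i (Z.symm y)
    apply Z.injective
    simpa using this.symm
  constructor
  · refine ⟨hA.1, ?_, ?_⟩
    · intro i
      ext x
      have h2 := congrArg (fun f => f (Z x)) (hA.2.1 i)
      simp only [comp_apply, ContinuousLinearEquiv.coe_coe] at h2 ⊢
      rw [happ i x, h2]
    · intro K' _ _ _ U' X' hU' hX'
      have hint : IntertwinesTuple T' U' (X' ∘L (Z.symm : H' →L[ℂ] H)) := by
        intro i
        ext y
        have h2 := congrArg (fun f => f (Z.symm y)) (hX' i)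
        simp only [comp_apply, ContinuousLinearEquiv.coe_coe] at h2 ⊢
        rw [happ' i y, h2]
      obtain ⟨Y, ⟨hY1, hY2⟩, hYu⟩ := hA.2.2 K' _ _ _ U' (X' ∘L (Z.symm : H' →L[ℂ] H)) hU' hint
      refine ⟨Y, ⟨hY1, ?_⟩, ?_⟩
      · ext x
        have := congrArg (fun f => f (Z x)) hY2
        simpa using this
      · rintro Y' ⟨hY1', hY2'⟩
        apply hYu
        refine ⟨hY1', ?_⟩
        ext y
        have := congrArg (fun f => f (Z.symm y)) hY2'
        simpa using this
  · intro K' _ _ _ U' Y hU' hY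
    have h0 : ‖Y‖ ≤ κ * ‖Y ∘L X‖ := hκ K' _ _ _ U' Y hU' hY
    have hcomp : Y ∘L X = (Y ∘L (X ∘L (Z : H →L[ℂ] H'))) ∘L (Z.symm : H' →L[ℂ] H) := by
      ext y; simp
    have hnorm : ‖Y ∘L X‖ ≤ ‖Y ∘L (X ∘L (Z : H →L[ℂ] H'))‖ * ‖(Z.symm : H' →L[ℂ] H)‖ := by
      rw [hcomp]; exact opNorm_comp_le _ _
    by_cases hκ0 : 0 ≤ κ
    · calc ‖Y‖ ≤ κ * ‖Y ∘L X‖ := h0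
        _ ≤ κ * (‖Y ∘L (X ∘L (Z : H →L[ℂ] H'))‖ * ‖(Z.symm : H' →L[ℂ] H)‖) :=
            mul_le_mul_of_nonneg_left hnorm hκ0
        _ = κ * ‖(Z.symm : H' →L[ℂ] H)‖ * ‖Y ∘L (X ∘L (Z : H →L[ℂ] H'))‖ := by ring
    · push_neg at hκ0
      have hle : ‖Y‖ ≤ 0 :=
        h0.trans (mul_nonpos_of_nonpos_of_nonneg hκ0.le (norm_nonneg _))
      have hY0 : Y = 0 := by
        rw [← norm_le_zero_iff]; exact hle
      simp [hY0]
end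

section
/- Let T be a commuting n-tuple of invertible power bounded operators on H with a unitary asymptote (X, U). Then the following are equivalent: (i) the inverse tuple T^{-1} has a unitary asymptote satisfying the Lower Orbit Condition; (ii) the pair (X, U^{-1}) (which is a unitary asymptote of T^{-1}) satisfies the Lower Orbit Condition; (iii) X is invertible; (iv) T is similar to a commuting n-tuple of unitaries. -/
open ContinuousLinearMap

/-- `T^k` for a multi-index `k ∈ ℤ₊ⁿ`. -/
def tuplePow {n : ℕ} {H : Type} [NormedAddCommGroup H] [InnerProductSpace ℂ H]
    (T : Fin n → H →L[ℂ] H) (k : Fin n → ℕ) : H →L[ℂ] H :=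
  (List.ofFn fun i => T i ^ k i).prod

/-- A witness that `T` has a unitary asymptote satisfying the Lower Orbit Condition. -/
structure AsymptoteLOCWitness {n : ℕ} {H : Type}
    [NormedAddCommGroup H] [InnerProductSpace ℂ H] [CompleteSpace H]
    (T : Fin n → H →L[ℂ] H) where
  K' : Type
  [grp : NormedAddCommGroup K']
  [ip : InnerProductSpace ℂ K']
  [cs : CompleteSpace K']
  U' : Fin n → K' →L[ℂ] K'
  X' : H →L[ℂ] K'
  asymp : IsUnitaryAsymptote T U' X'
  κ : ℝ
  κnn : 0 ≤ κ
  loc : ∀ h : H, (⨅ k : Fin n → ℕ, ‖tuplePow T k h‖) ≤ κ * ‖X' h‖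

/-- A witness that `T` is similar to a commuting tuple of unitaries. -/
structure UnitarySimilarityWitness {n : ℕ} {H : Type}
    [NormedAddCommGroup H] [InnerProductSpace ℂ H] [CompleteSpace H]
    (T : Fin n → H →L[ℂ] H) where
  K' : Type
  [grp : NormedAddCommGroup K']
  [ip : InnerProductSpace ℂ K']
  [cs : CompleteSpace K']
  W : Fin n → K' →L[ℂ] K'
  Z : H ≃L[ℂ] K'
  unit : UnitaryTuple W
  comm : CommutingTuple W
  intertwine : ∀ i, (Z : H →L[ℂ] K') ∘L T i = W i ∘L (Z : H →L[ℂ] K')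

/-!
Power boundedness of `T` gives `‖h‖ ≤ s ‖T⁻ᵏ h‖` for every multi-index `k`, so a Lower Orbit
Condition for `T⁻¹` along `X` makes `X` bounded below. Its range is then closed and reduces `U`:
it is invariant under `U` and under `U⁻¹ = U*`, which `X` intertwines with `T` and `T⁻¹`. The
orthogonal projection onto it intertwines `(X, U)` with itself, so by uniqueness in the universal
property it is the identity, and `X` is invertible. Conversely, a similarity of `T` with a unitary
tuple factors through `X`, which bounds `X` below, and every unitary asymptote of `T⁻¹` factors
through `(X, U⁻¹)`, which transfers the Lower Orbit Condition.
-/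

theorem List.prod_ofFn_mul_prod_ofFn {M : Type*} [Monoid M] {n : ℕ} (f g : Fin n → M)
    (hfg : ∀ i j, Commute (f i) (g j)) :
    (List.ofFn f).prod * (List.ofFn g).prod = (List.ofFn fun i => f i * g i).prod := by
  induction n with
  | zero => simp
  | succ n ih =>
    have hcomm : Commute (List.ofFn fun i => f i.succ).prod (g 0) :=
      Commute.list_prod_left _ _ fun x hx => by
        obtain ⟨i, rfl⟩ := List.mem_ofFn.mp hx
        exact hfg _ _
    simp only [List.ofFn_succ, List.prod_cons,
      ← ih (fun i => f i.succ) (fun i => g i.succ) fun i j => hfg _ _]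
    rw [mul_assoc, hcomm.left_comm, mul_assoc]

theorem ContinuousLinearMap.comp_units_inv_eq_of_comp_eq {R M N : Type*} [Semiring R]
    [TopologicalSpace M] [AddCommMonoid M] [Module R M]
    [TopologicalSpace N] [AddCommMonoid N] [Module R N]
    {A : M →L[R] N} {b : (M →L[R] M)ˣ} {c : (N →L[R] N)ˣ}
    (h : A ∘L (b : M →L[R] M) = (c : N →L[R] N) ∘L A) :
    A ∘L (↑b⁻¹ : M →L[R] M) = (↑c⁻¹ : N →L[R] N) ∘L A := by
  ext x
  have := congrArg (fun B : M →L[R] N => (↑c⁻¹ : N →L[R] N) (B ((↑b⁻¹ : M →L[R] M) x))) h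
  simpa [← mul_apply_eq_comp] using this.symm

theorem ContinuousLinearEquiv.norm_le_norm_symm_mul_norm_apply {𝕜 E F : Type*}
    [NontriviallyNormedField 𝕜] [NormedAddCommGroup E] [NormedSpace 𝕜 E]
    [NormedAddCommGroup F] [NormedSpace 𝕜 F] (Z : E ≃L[𝕜] F) (x : E) :
    ‖x‖ ≤ ‖(Z.symm : F →L[𝕜] E)‖ * ‖Z x‖ := by
  simpa using (Z.symm : F →L[𝕜] E).le_opNorm (Z x)

theorem Submodule.commute_starProjection {𝕜 E : Type*} [RCLike 𝕜] [NormedAddCommGroup E]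
    [InnerProductSpace 𝕜 E] [CompleteSpace E] (M : Submodule 𝕜 E) [M.HasOrthogonalProjection]
    {A : E →L[𝕜] E} (hA : M ∈ Module.End.invtSubmodule A.toLinearMap)
    (hA' : M ∈ Module.End.invtSubmodule (adjoint A).toLinearMap) :
    Commute M.starProjection A := by
  rw [M.isIdempotentElem_starProjection.commute_iff, range_starProjection, ker_starProjection]
  exact ⟨hA, orthogonal_mem_invtSubmodule hA'⟩

/-- `⨅ k, ‖S^k h‖` is the paper's `o-inf(S, h)`. -/
def LowerOrbitCondition {n : ℕ} {H K : Type} [NormedAddCommGroup H] [InnerProductSpace ℂ H]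
    [NormedAddCommGroup K] [InnerProductSpace ℂ K]
    (S : Fin n → H →L[ℂ] H) (X : H →L[ℂ] K) (κ : ℝ) : Prop :=
  ∀ h : H, ⨅ k : Fin n → ℕ, ‖tuplePow S k h‖ ≤ κ * ‖X h‖

section Orbits

variable {n : ℕ} {H K K' : Type} [NormedAddCommGroup H] [InnerProductSpace ℂ H]
  [NormedAddCommGroup K] [InnerProductSpace ℂ K] [NormedAddCommGroup K'] [InnerProductSpace ℂ K']

theorem tuplePow_zero (T : Fin n → H →L[ℂ] H) : tuplePow T 0 = 1 := by
  simp [tuplePow]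

theorem tuplePow_mul_tuplePow_eq_one {T S : Fin n → H →L[ℂ] H}
    (hTS : ∀ i j, Commute (T i) (S j)) (hinv : ∀ i, T i * S i = 1) (k : Fin n → ℕ) :
    tuplePow T k * tuplePow S k = 1 := by
  rw [tuplePow, tuplePow, List.prod_ofFn_mul_prod_ofFn _ _ fun i j => (hTS i j).pow_pow _ _]
  simp [← (hTS _ _).mul_pow, hinv]

theorem iInf_norm_tuplePow_apply_le (T : Fin n → H →L[ℂ] H) (h : H) :
    ⨅ k : Fin n → ℕ, ‖tuplePow T k h‖ ≤ ‖h‖ := by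
  refine (ciInf_le ⟨0, Set.forall_mem_range.2 fun k => norm_nonneg (tuplePow T k h)⟩ 0).trans ?_
  rw [tuplePow_zero, one_apply_eq_self]

theorem norm_le_mul_iInf_norm_tuplePow_apply {T S : Fin n → H →L[ℂ] H} {s : ℝ}
    (hs : ∀ k, ‖tuplePow T k‖ ≤ s) (hTS : ∀ i j, Commute (T i) (S j))
    (hinv : ∀ i, T i * S i = 1) (h : H) :
    ‖h‖ ≤ s * ⨅ k : Fin n → ℕ, ‖tuplePow S k h‖ := by
  rw [Real.mul_iInf_of_nonneg ((norm_nonneg _).trans (hs 0))]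
  refine le_ciInf fun k => ?_
  calc ‖h‖ = ‖tuplePow T k (tuplePow S k h)‖ := by
        rw [← mul_apply_eq_comp, tuplePow_mul_tuplePow_eq_one hTS hinv, one_apply_eq_self]
    _ ≤ s * ‖tuplePow S k h‖ := (le_opNorm _ _).trans (by gcongr; exact hs k)

namespace LowerOrbitCondition

variable {S : Fin n → H →L[ℂ] H}

theorem of_norm_le {X : H →L[ℂ] K} {C : ℝ} (hC : ∀ h, ‖h‖ ≤ C * ‖X h‖) :
    LowerOrbitCondition S X C :=
  fun h => (iInf_norm_tuplePow_apply_le S h).trans (hC h)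

theorem of_comp {X : H →L[ℂ] K} {Y : K →L[ℂ] K'} {κ : ℝ}
    (hloc : LowerOrbitCondition S (Y ∘L X) κ) (hκ : 0 ≤ κ) :
    LowerOrbitCondition S X (κ * ‖Y‖) := fun h =>
  calc ⨅ k : Fin n → ℕ, ‖tuplePow S k h‖ ≤ κ * ‖Y (X h)‖ := hloc h
    _ ≤ κ * ‖Y‖ * ‖X h‖ := by rw [mul_assoc]; gcongr; exact Y.le_opNorm _

theorem norm_le {T : Fin n → H →L[ℂ] H} {X : H →L[ℂ] K} {s κ : ℝ}
    (hloc : LowerOrbitCondition S X κ) (hs : ∀ k, ‖tuplePow T k‖ ≤ s)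
    (hTS : ∀ i j, Commute (T i) (S j)) (hinv : ∀ i, T i * S i = 1) (h : H) :
    ‖h‖ ≤ s * κ * ‖X h‖ :=
  calc ‖h‖ ≤ s * ⨅ k : Fin n → ℕ, ‖tuplePow S k h‖ :=
        norm_le_mul_iInf_norm_tuplePow_apply hs hTS hinv h
    _ ≤ s * κ * ‖X h‖ := by
        rw [mul_assoc]
        gcongr
        · exact (norm_nonneg _).trans (hs 0)
        · exact hloc h

end LowerOrbitCondition

end Orbits

section Intertwining

variable {n : ℕ} {H K : Type} [NormedAddCommGroup H] [InnerProductSpace ℂ H]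
  [NormedAddCommGroup K] [InnerProductSpace ℂ K]

theorem IntertwinesTuple.units_inv {b : Fin n → (H →L[ℂ] H)ˣ} {c : Fin n → (K →L[ℂ] K)ˣ}
    {X : H →L[ℂ] K} (h : IntertwinesTuple (fun i => ↑(b i)) (fun i => ↑(c i)) X) :
    IntertwinesTuple (fun i => ↑(b i)⁻¹) (fun i => ↑(c i)⁻¹) X :=
  fun i => comp_units_inv_eq_of_comp_eq (h i)

theorem intertwinesTuple_units_inv_iff {b : Fin n → (H →L[ℂ] H)ˣ} {c : Fin n → (K →L[ℂ] K)ˣ}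
    {X : H →L[ℂ] K} :
    IntertwinesTuple (fun i => ↑(b i)⁻¹) (fun i => ↑(c i)⁻¹) X ↔
      IntertwinesTuple (fun i => ↑(b i)) (fun i => ↑(c i)) X :=
  ⟨fun h => by simpa using h.units_inv, IntertwinesTuple.units_inv⟩

theorem CommutingTuple.of_intertwines_surjective {T : Fin n → H →L[ℂ] H}
    {U : Fin n → K →L[ℂ] K} {X : H →L[ℂ] K} (hT : CommutingTuple T)
    (hX : IntertwinesTuple T U X) (hsurj : Function.Surjective X) : CommutingTuple U := by
  intro i j
  ext y
  obtain ⟨h, rfl⟩ := hsurj y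
  have hUX : ∀ i h, U i (X h) = X (T i h) := fun i h => congr($(hX i) h).symm
  simpa only [comp_apply, hUX] using congr(X ($(hT i j) h))

end Intertwining

namespace IsUnitaryAsymptote

variable {n : ℕ} {H K : Type} [NormedAddCommGroup H] [InnerProductSpace ℂ H] [CompleteSpace H]
  [NormedAddCommGroup K] [InnerProductSpace ℂ K] [CompleteSpace K]
  {U : Fin n → K →L[ℂ] K} {X : H →L[ℂ] K}

theorem inv {u : Fin n → (H →L[ℂ] H)ˣ} (hA : IsUnitaryAsymptote (fun i => ↑(u i)) U X) :
    IsUnitaryAsymptote (fun i => ↑(u i)⁻¹) (fun i => star (U i)) X := by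
  obtain ⟨hU, hX, huniv⟩ := hA
  let uU i := Unitary.toUnits ⟨U i, hU i⟩
  refine ⟨fun i => Unitary.star_mem (hU i), hX.units_inv (c := uU), ?_⟩
  intro K' _ _ _ U' X' hU' hX'
  let uU' i := Unitary.toUnits ⟨U' i, hU' i⟩
  refine (existsUnique_congr fun Y => and_congr_left' ?_).mp
    (huniv K' _ _ _ (fun i => star (U' i)) X' (fun i => Unitary.star_mem (hU' i))
      ((intertwinesTuple_units_inv_iff (c := fun i => (uU' i)⁻¹)).mp hX'))
  exact (intertwinesTuple_units_inv_iff (b := uU) (c := fun i => (uU' i)⁻¹)).symm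

variable {T : Fin n → H →L[ℂ] H}

theorem eq_one_of_intertwines (hA : IsUnitaryAsymptote T U X) {Y : K →L[ℂ] K}
    (hY : IntertwinesTuple U U Y) (hYX : Y ∘L X = X) : Y = 1 := by
  obtain ⟨_, -, huniq⟩ := hA.2.2 K _ _ _ U X hA.1 hA.2.1
  exact (huniq Y ⟨hY, hYX.symm⟩).trans
    (huniq 1 ⟨fun i => by simp [one_def], by simp [one_def]⟩).symm

theorem minimalPair (hA : IsUnitaryAsymptote T U X) : MinimalPair U X := by
  intro M hM hXM hUM hU'M
  have : CompleteSpace M := hM.completeSpace_coe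
  have hP : M.starProjection = 1 := by
    refine hA.eq_one_of_intertwines (fun i => (M.commute_starProjection ?_ ?_).eq) ?_
    · exact (Module.End.mem_invtSubmodule_iff_forall_mem_of_mem _).mpr (hUM i)
    · exact (Module.End.mem_invtSubmodule_iff_forall_mem_of_mem _).mpr (hU'M i)
    · ext h
      exact Submodule.starProjection_eq_self_iff.mpr (hXM h)
  rw [← M.range_starProjection, hP, one_def, coe_id, LinearMap.range_id]

theorem surjective_of_isClosed_range (hA : IsUnitaryAsymptote T U X) {S : Fin n → H →L[ℂ] H}
    (hS : IntertwinesTuple S (fun i => star (U i)) X) (hX : IsClosed (Set.range X)) :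
    Function.Surjective X := by
  refine LinearMap.range_eq_top.mp (hA.minimalPair (LinearMap.range (X : H →ₗ[ℂ] K))
    (by rwa [LinearMap.coe_range]) (fun h => ⟨h, rfl⟩) ?_ ?_)
  · rintro i _ ⟨h, rfl⟩
    exact ⟨T i h, congr($(hA.2.1 i) h)⟩
  · rintro i _ ⟨h, rfl⟩
    exact ⟨S i h, by simpa [star_eq_adjoint] using congr($(hS i) h)⟩

theorem exists_continuousLinearEquiv_of_norm_le (hA : IsUnitaryAsymptote T U X)
    {S : Fin n → H →L[ℂ] H} (hS : IntertwinesTuple S (fun i => star (U i)) X) {C : ℝ}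
    (hC : ∀ h, ‖h‖ ≤ C * ‖X h‖) : ∃ Z : H ≃L[ℂ] K, (Z : H →L[ℂ] K) = X := by
  have hX : AntilipschitzWith C.toNNReal X := X.antilipschitz_of_bound fun h =>
    (hC h).trans (by gcongr; exact C.le_coe_toNNReal)
  have hsurj := hA.surjective_of_isClosed_range hS (hX.isClosed_range X.uniformContinuous)
  exact ⟨.ofBijective X (LinearMap.ker_eq_bot.mpr hX.injective)
    (LinearMap.range_eq_top.mpr hsurj), ContinuousLinearEquiv.coe_ofBijective _ _ _⟩

end IsUnitaryAsymptote

/-- For a power bounded commuting tuple of invertible operators with unitary asymptote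
`(X, U)`, the following are equivalent: (i) `T⁻¹` has a unitary asymptote satisfying
the Lower Orbit Condition; (ii) the asymptote `(X, U⁻¹)` of `T⁻¹` satisfies the Lower
Orbit Condition; (iii) `X` is invertible; (iv) `T` is similar to a commuting tuple of
unitaries. -/
theorem inverse_tuple_LOC_tfae {n : ℕ} {H K : Type}
    [NormedAddCommGroup H] [InnerProductSpace ℂ H] [CompleteSpace H]
    [NormedAddCommGroup K] [InnerProductSpace ℂ K] [CompleteSpace K]
    (T : Fin n → H →L[ℂ] H) (U : Fin n → K →L[ℂ] K) (X : H →L[ℂ] K) (s : ℝ)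
    (hT : CommutingTuple T) (hinv : ∀ i, IsUnit (T i))
    (hs : ∀ k : Fin n → ℕ, ‖tuplePow T k‖ ≤ s)
    (hA : IsUnitaryAsymptote T U X) :
    [Nonempty (AsymptoteLOCWitness
        (fun i => (((hinv i).unit⁻¹ : (H →L[ℂ] H)ˣ) : H →L[ℂ] H))),
      ∃ κ : ℝ, 0 ≤ κ ∧ ∀ h : H,
        (⨅ k : Fin n → ℕ,
          ‖tuplePow (fun i => (((hinv i).unit⁻¹ : (H →L[ℂ] H)ˣ) : H →L[ℂ] H)) k h‖)
          ≤ κ * ‖X h‖,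
      ∃ Z : H ≃L[ℂ] K, (Z : H →L[ℂ] K) = X,
      Nonempty (UnitarySimilarityWitness T)].TFAE := by
  have hAinv : IsUnitaryAsymptote (fun i => ↑(hinv i).unit⁻¹) (fun i => star (U i)) X :=
    IsUnitaryAsymptote.inv (by simpa only [IsUnit.unit_spec] using hA)
  have hTT : ∀ i j, Commute (T i) ↑(hinv j).unit⁻¹ := fun i j =>
    Commute.units_inv_right (by rw [IsUnit.unit_spec]; exact hT i j)
  tfae_have 1 → 2
  | ⟨w⟩ => by
    obtain ⟨K', U', X', hA', κ, hκ, hloc⟩ := w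
    obtain ⟨Y, ⟨-, hY⟩, -⟩ := hAinv.2.2 K' _ _ _ U' X' hA'.1 hA'.2.1
    exact ⟨κ * ‖Y‖, by positivity, LowerOrbitCondition.of_comp (hY ▸ hloc) hκ⟩
  tfae_have 2 → 3
  | ⟨κ, _, hloc⟩ => hA.exists_continuousLinearEquiv_of_norm_le hAinv.2.1
      (LowerOrbitCondition.norm_le hloc hs hTT fun i => (hinv i).mul_val_inv)
  tfae_have 3 → 4
  | ⟨Z, hZ⟩ => ⟨⟨K, U, Z, hA.1, hT.of_intertwines_surjective hA.2.1 (hZ ▸ Z.surjective),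
      hZ ▸ hA.2.1⟩⟩
  tfae_have 4 → 2
  | ⟨w⟩ => by
    obtain ⟨K', W, Z, hW, -, hZ⟩ := w
    obtain ⟨Y, ⟨-, hY⟩, -⟩ := hA.2.2 K' _ _ _ W Z hW hZ
    have hloc : LowerOrbitCondition (fun i => ↑(hinv i).unit⁻¹) (Y ∘L X)
        ‖(Z.symm : K' →L[ℂ] H)‖ :=
      hY ▸ .of_norm_le Z.norm_le_norm_symm_mul_norm_apply
    exact ⟨_, by positivity, hloc.of_comp (norm_nonneg _)⟩
  tfae_have 3 → 1
  | ⟨Z, hZ⟩ => by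
    subst hZ
    exact ⟨⟨K, _, Z, hAinv, _, norm_nonneg _,
      LowerOrbitCondition.of_norm_le Z.norm_le_norm_symm_mul_norm_apply⟩⟩
  tfae_finish
end

section
/- If T is a commuting n-tuple of invertible operators on H, and (X, U) is a unitary asymptote of T with norm-control κ, then (X, U^{-1}) is a unitary asymptote of T^{-1} with norm-control κ. -/
open ContinuousLinearMap

/-!
Inverting every `T i` and replacing every `U i` by `(U i)⁻¹ = (U i)*` does not change which
operators intertwine: `X T = U X` gives `X T⁻¹ = U⁻¹ X`. So the unitary intertwining pairs of
`T⁻¹` are exactly those of `T` with the unitary tuple inverted, and both the universal property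
and norm-control pass from `(X, U)` to `(X, U*)`.
-/

section Intertwining

variable {R : Type*} [Semiring R] {M N : Type*} [TopologicalSpace M] [AddCommMonoid M]
  [Module R M] [TopologicalSpace N] [AddCommMonoid N] [Module R N]

theorem ContinuousLinearMap.comp_eq_comp_of_inverses {A B : M →L[R] M} {S S' : N →L[R] N}
    {X : M →L[R] N} (hAB : A ∘L B = 1) (hS'S : S' ∘L S = 1) (h : X ∘L A = S ∘L X) :
    X ∘L B = S' ∘L X :=
  calc X ∘L B = (S' ∘L S) ∘L X ∘L B := by rw [hS'S, one_def, id_comp]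
    _ = S' ∘L X ∘L A ∘L B := by rw [← comp_assoc X, h, comp_assoc, comp_assoc]
    _ = S' ∘L X := by rw [hAB, one_def, comp_id]

end Intertwining

variable {n : ℕ} {H K K' : Type}
  [NormedAddCommGroup H] [InnerProductSpace ℂ H]
  [NormedAddCommGroup K] [InnerProductSpace ℂ K]

theorem IntertwinesTuple.of_inverses {T T' : Fin n → H →L[ℂ] H} {U U' : Fin n → K →L[ℂ] K}
    {X : H →L[ℂ] K} (hT : ∀ i, T i ∘L T' i = 1) (hU : ∀ i, U' i ∘L U i = 1)
    (h : IntertwinesTuple T U X) : IntertwinesTuple T' U' X :=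
  fun i => comp_eq_comp_of_inverses (hT i) (hU i) (h i)

variable [CompleteSpace K] [NormedAddCommGroup K'] [InnerProductSpace ℂ K'] [CompleteSpace K']

theorem adjoint_comp_self_of_mem_unitary {S : K →L[ℂ] K} (hS : S ∈ unitary (K →L[ℂ] K)) :
    adjoint S ∘L S = 1 := by
  rw [← star_eq_adjoint, ← mul_def, Unitary.star_mul_self_of_mem hS]

theorem self_comp_adjoint_of_mem_unitary {S : K →L[ℂ] K} (hS : S ∈ unitary (K →L[ℂ] K)) :
    S ∘L adjoint S = 1 := by
  rw [← star_eq_adjoint, ← mul_def, Unitary.mul_star_self_of_mem hS]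

theorem UnitaryTuple.adjoint {U : Fin n → K →L[ℂ] K} (hU : UnitaryTuple U) :
    UnitaryTuple (fun i => adjoint (U i)) :=
  fun i => by
    simp only [← star_eq_adjoint]
    exact Unitary.star_mem (hU i)

theorem intertwinesTuple_adjoint_iff {U : Fin n → K →L[ℂ] K} {U' : Fin n → K' →L[ℂ] K'}
    (hU : UnitaryTuple U) (hU' : UnitaryTuple U') {Y : K →L[ℂ] K'} :
    IntertwinesTuple U (fun i => adjoint (U' i)) Y ↔
      IntertwinesTuple (fun i => adjoint (U i)) U' Y :=
  ⟨.of_inverses (fun i => self_comp_adjoint_of_mem_unitary (hU i))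
      (fun i => self_comp_adjoint_of_mem_unitary (hU' i)),
    .of_inverses (fun i => adjoint_comp_self_of_mem_unitary (hU i))
      (fun i => adjoint_comp_self_of_mem_unitary (hU' i))⟩

theorem HasNormControl.adjoint {U : Fin n → K →L[ℂ] K} {X : H →L[ℂ] K} {κ : ℝ}
    (hU : UnitaryTuple U) (h : HasNormControl U X κ) :
    HasNormControl (fun i => adjoint (U i)) X κ := by
  intro K' _ _ _ U' Y hU' hY
  exact h K' _ _ _ _ Y hU'.adjoint ((intertwinesTuple_adjoint_iff hU hU').2 hY)

theorem IsUnitaryAsymptote.of_inverses [CompleteSpace H] {T T' : Fin n → H →L[ℂ] H}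
    {U : Fin n → K →L[ℂ] K} {X : H →L[ℂ] K} (hTT' : ∀ i, T i ∘L T' i = 1)
    (hT'T : ∀ i, T' i ∘L T i = 1) (h : IsUnitaryAsymptote T U X) :
    IsUnitaryAsymptote T' (fun i => adjoint (U i)) X := by
  obtain ⟨hU, hX, huniv⟩ := h
  refine ⟨hU.adjoint, hX.of_inverses hTT' fun i => adjoint_comp_self_of_mem_unitary (hU i), ?_⟩
  intro K' _ _ _ U' X' hU' hX'
  have hX'T : IntertwinesTuple T (fun i => adjoint (U' i)) X' :=
    hX'.of_inverses hT'T fun i => adjoint_comp_self_of_mem_unitary (hU' i)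
  obtain ⟨Y, ⟨hY, rfl⟩, huniq⟩ := huniv K' _ _ _ _ X' hU'.adjoint hX'T
  exact ⟨Y, ⟨(intertwinesTuple_adjoint_iff hU hU').1 hY, rfl⟩,
    fun Z hZ => huniq Z ⟨(intertwinesTuple_adjoint_iff hU hU').2 hZ.1, hZ.2⟩⟩

theorem unitaryAsymptote_inverse_general {n : ℕ} {H K : Type}
    [NormedAddCommGroup H] [InnerProductSpace ℂ H] [CompleteSpace H]
    [NormedAddCommGroup K] [InnerProductSpace ℂ K] [CompleteSpace K]
    (T : Fin n → H →L[ℂ] H) (U : Fin n → K →L[ℂ] K) (X : H →L[ℂ] K) (κ : ℝ)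
    (hinv : ∀ i, IsUnit (T i))
    (hA : IsUnitaryAsymptote T U X) (hκ : HasNormControl U X κ) :
    IsUnitaryAsymptote (fun i => (((hinv i).unit⁻¹ : (H →L[ℂ] H)ˣ) : H →L[ℂ] H))
      (fun i => adjoint (U i)) X ∧
    HasNormControl (fun i => adjoint (U i)) X κ :=
  ⟨hA.of_inverses (fun i => (hinv i).mul_val_inv) (fun i => (hinv i).val_inv_mul),
    hκ.adjoint hA.1⟩

/-- If `T` is a commuting tuple of invertible operators with unitary asymptote `(X, U)`
with norm-control `κ`, then `(X, U⁻¹)` is a unitary asymptote of `T⁻¹` with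
norm-control `κ`.  (Here `U i ⁻¹ = (U i)*` since the `U i` are unitary.) -/
theorem unitaryAsymptote_inverse {n : ℕ} {H K : Type}
    [NormedAddCommGroup H] [InnerProductSpace ℂ H] [CompleteSpace H]
    [NormedAddCommGroup K] [InnerProductSpace ℂ K] [CompleteSpace K]
    (T : Fin n → H →L[ℂ] H) (U : Fin n → K →L[ℂ] K) (X : H →L[ℂ] K) (κ : ℝ)
    (hT : CommutingTuple T) (hinv : ∀ i, IsUnit (T i))
    (hA : IsUnitaryAsymptote T U X) (hκ : HasNormControl U X κ) :
    IsUnitaryAsymptote (fun i => (((hinv i).unit⁻¹ : (H →L[ℂ] H)ˣ) : H →L[ℂ] H))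
      (fun i => adjoint (U i)) X ∧
    HasNormControl (fun i => adjoint (U i)) X κ :=
  unitaryAsymptote_inverse_general T U X κ hinv hA hκ
end

section
/- Let T be an asymptotically non-vanishing commuting n-tuple (i.e., its unitary asymptote (X, U) has X ≠ 0) with spectral measure E of U. If T is not quasianalytic — i.e., there exist nonzero u, v ∈ H with ker X = {0} (after reducing by the annihilating subspace) such that the localizations E_{Xu} and E_{Xv} are not mutually absolutely continuous — then T possesses a nontrivial hyperinvariant subspace. -/
open ContinuousLinearMap

/-- A (projection-valued) spectral measure on the measurable space `Ω`, with values in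
orthogonal projections on the Hilbert space `K`. -/
def IsSpectralMeasure {Ω : Type} [MeasurableSpace Ω] {K : Type}
    [NormedAddCommGroup K] [InnerProductSpace ℂ K] [CompleteSpace K]
    (E : Set Ω → (K →L[ℂ] K)) : Prop :=
  (∀ ω, MeasurableSet ω → IsIdempotentElem (E ω) ∧ adjoint (E ω) = E ω) ∧
  E Set.univ = 1 ∧
  (∀ ω ω', MeasurableSet ω → MeasurableSet ω' → E (ω ∩ ω') = E ω ∘L E ω') ∧
  (∀ f : ℕ → Set Ω, (∀ m, MeasurableSet (f m)) → Pairwise (Function.onFun Disjoint f) →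
    ∀ x : K, HasSum (fun m => E (f m) x) (E (⋃ m, f m) x))

/-! The hyperinvariant subspace is `X⁻¹(ker E(ω))`: it contains `v` but not `u`, and it is
hyperinvariant because `ker E(ω)` is hyperinvariant for `U` and every operator commuting
with `T` lifts, through the universal property of the unitary asymptote, to one commuting
with `U`. -/

section Hyperinvariant

variable {ι R V : Type*} [Semiring R] [TopologicalSpace V] [AddCommMonoid V] [Module R V]

def IsHyperinvariant (T : ι → V →L[R] V) (M : Submodule R V) : Prop :=
  ∀ C : V →L[R] V, (∀ i, C ∘L T i = T i ∘L C) → ∀ x ∈ M, C x ∈ M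

theorem isHyperinvariant_ker_of_commute {T : ι → V →L[R] V} {P : V →L[R] V}
    (hP : ∀ D : V →L[R] V, (∀ i, D ∘L T i = T i ∘L D) → D ∘L P = P ∘L D) :
    IsHyperinvariant T (LinearMap.ker (P : V →ₗ[R] V)) := by
  intro D hD x (hx : P x = 0)
  change P (D x) = 0
  rw [← comp_apply, ← hP D hD, comp_apply, hx, map_zero]

end Hyperinvariant

section UnitaryAsymptote

variable {n : ℕ} {H K : Type}
  [NormedAddCommGroup H] [InnerProductSpace ℂ H] [NormedAddCommGroup K] [InnerProductSpace ℂ K]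
  {T : Fin n → H →L[ℂ] H} {U : Fin n → K →L[ℂ] K} {X : H →L[ℂ] K}

theorem IntertwinesTuple.comp_of_commute (hX : IntertwinesTuple T U X) {C : H →L[ℂ] H}
    (hC : ∀ i, C ∘L T i = T i ∘L C) : IntertwinesTuple T U (X ∘L C) := fun i => by
  rw [comp_assoc, hC i, ← comp_assoc, hX i, comp_assoc]

variable [CompleteSpace H] [CompleteSpace K]

theorem IsUnitaryAsymptote.exists_lift (hA : IsUnitaryAsymptote T U X) {C : H →L[ℂ] H}
    (hC : ∀ i, C ∘L T i = T i ∘L C) :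
    ∃ D : K →L[ℂ] K, (∀ i, D ∘L U i = U i ∘L D) ∧ X ∘L C = D ∘L X :=
  let ⟨hU, hX, huniv⟩ := hA
  (huniv K _ _ _ U (X ∘L C) hU (hX.comp_of_commute hC)).exists

theorem IsUnitaryAsymptote.isHyperinvariant_comap (hA : IsUnitaryAsymptote T U X)
    {N : Submodule ℂ K} (hN : IsHyperinvariant U N) :
    IsHyperinvariant T (N.comap (X : H →ₗ[ℂ] K)) := by
  intro C hC x hx
  obtain ⟨D, hDU, hXC⟩ := hA.exists_lift hC
  have hXCx : X (C x) = D (X x) := congrArg (· x) hXC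
  simpa only [Submodule.mem_comap, coe_coe, hXCx] using hN D hDU _ hx

end UnitaryAsymptote

theorem not_quasianalytic_hyperinvariant_general {n : ℕ} {H K : Type}
    [NormedAddCommGroup H] [InnerProductSpace ℂ H] [CompleteSpace H]
    [NormedAddCommGroup K] [InnerProductSpace ℂ K] [CompleteSpace K]
    (T : Fin n → H →L[ℂ] H) (U : Fin n → K →L[ℂ] K) (X : H →L[ℂ] K)
    (hA : IsUnitaryAsymptote T U X)
    (E : Set (Fin n → AddCircle (1 : ℝ)) → (K →L[ℂ] K))
    (hUE : ∀ D : K →L[ℂ] K, (∀ i, D ∘L U i = U i ∘L D) →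
      ∀ ω, MeasurableSet ω → D ∘L E ω = E ω ∘L D)
    (u v : H) (hv : v ≠ 0)
    (ω : Set (Fin n → AddCircle (1 : ℝ))) (hω : MeasurableSet ω)
    (hEv : E ω (X v) = 0) (hEu : E ω (X u) ≠ 0) :
    ∃ M : Submodule ℂ H, IsClosed (M : Set H) ∧ M ≠ ⊥ ∧ M ≠ ⊤ ∧
      ∀ C : H →L[ℂ] H, (∀ i, C ∘L T i = T i ∘L C) → ∀ h ∈ M, C h ∈ M := by
  set M := (LinearMap.ker (E ω : K →ₗ[ℂ] K)).comap (X : H →ₗ[ℂ] K)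
  have hvM : v ∈ M := hEv
  have huM : u ∉ M := hEu
  refine ⟨M, (isClosed_ker (E ω)).preimage X.continuous, ?_, ?_, ?_⟩
  · exact fun h => hv ((Submodule.eq_bot_iff M).1 h v hvM)
  · exact fun h => huM (h ▸ Submodule.mem_top)
  · exact hA.isHyperinvariant_comap
      (isHyperinvariant_ker_of_commute fun D hD => hUE D hD ω hω)

/-- If an asymptotically non-vanishing commuting tuple `T` (with injective `X`) is not
quasianalytic — witnessed by nonzero vectors `u, v` and a Borel set `ω` on which the
localizations `E_{Xu}` and `E_{Xv}` are not mutually absolutely continuous — then `T`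
has a nontrivial hyperinvariant subspace. -/
theorem not_quasianalytic_hyperinvariant {n : ℕ} {H K : Type}
    [NormedAddCommGroup H] [InnerProductSpace ℂ H] [CompleteSpace H]
    [NormedAddCommGroup K] [InnerProductSpace ℂ K] [CompleteSpace K]
    (T : Fin n → H →L[ℂ] H) (U : Fin n → K →L[ℂ] K) (X : H →L[ℂ] K)
    (hT : CommutingTuple T) (hA : IsUnitaryAsymptote T U X) (hX0 : X ≠ 0)
    (hXinj : LinearMap.ker (X : H →ₗ[ℂ] K) = ⊥)
    (E : Set (Fin n → AddCircle (1 : ℝ)) → (K →L[ℂ] K)) (hE : IsSpectralMeasure E)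
    (hUE : ∀ D : K →L[ℂ] K, (∀ i, D ∘L U i = U i ∘L D) →
      ∀ ω, MeasurableSet ω → D ∘L E ω = E ω ∘L D)
    (u v : H) (hu : u ≠ 0) (hv : v ≠ 0)
    (ω : Set (Fin n → AddCircle (1 : ℝ))) (hω : MeasurableSet ω)
    (hEv : E ω (X v) = 0) (hEu : E ω (X u) ≠ 0) :
    ∃ M : Submodule ℂ H, IsClosed (M : Set H) ∧ M ≠ ⊥ ∧ M ≠ ⊤ ∧
      ∀ C : H →L[ℂ] H, (∀ i, C ∘L T i = T i ∘L C) → ∀ h ∈ M, C h ∈ M :=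
  not_quasianalytic_hyperinvariant_general T U X hA E hUE u v hv ω hω hEv hEu
end
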